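/- The logarithm on 1-units is a well-defined order-preserving group isomorphism from the multiplicative group 1 + k((G^{<1})) onto the additive group (k((G^{<1})), +); in particular, for every ε ∈ k((G^{<1})) the series Σ_{i≥1} (−1)^{i−1} ε^i/i has anti well-ordered support contained in G^{<1}, the map 1+ε ↦ Σ_{i≥1} (−1)^{i−1} ε^i/i sends products to sums, is strictly order-preserving, and is bijective. -/

import Mathlib

/-! Common framework: fields of generalized power series `k((G))` over a multiplicative
linearly ordered abelian group `G`, realized as Mathlib Hahn series over the additive
order-dual of `G` (so that anti well-ordered supports in `G` become partially
well-ordered supports), with the anti-lexicographic order. -/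

noncomputable section
open HahnSeries
open scoped Classical

/-- The additive order-dual copy of the multiplicative group `G`:
anti well-ordered subsets of `G` correspond to well-ordered subsets of `gdual G`. -/
abbrev gdual (G : Type*) [CommGroup G] [LinearOrder G] [IsOrderedMonoid G] : Type _ := Additive Gᵒᵈ

/-- View an element of `G` as an exponent (element of `gdual G`). -/
def toGd {G : Type*} [CommGroup G] [LinearOrder G] [IsOrderedMonoid G] (g : G) : gdual G :=
  Additive.ofMul (OrderDual.toDual g)

/-- View an exponent (element of `gdual G`) as an element of `G`. -/
def toG {G : Type*} [CommGroup G] [LinearOrder G] [IsOrderedMonoid G] (γ : gdual G) : G :=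
  OrderDual.ofDual (Additive.toMul γ)

section HahnOrder

variable {k : Type*} [Field k] [LinearOrder k] [IsStrictOrderedRing k] {Γ' : Type*} [LinearOrder Γ']

theorem HahnSeries.leadingCoeff_of_ne {Γ R : Type*} [LinearOrder Γ] [Zero R] {x : HahnSeries Γ R}
    (hx : x ≠ 0) :
    x.leadingCoeff = x.coeff (x.isWF_support.min (HahnSeries.support_nonempty_iff.2 hx)) := by
  rw [HahnSeries.leadingCoeff_of_ne_zero hx]
  congr 1
  exact (WithTop.untop_eq_iff _).2 (HahnSeries.orderTop_of_ne_zero hx)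

theorem hahn_leadingCoeff_neg (x : HahnSeries Γ' k) : (-x).leadingCoeff = -x.leadingCoeff := by
  by_cases h : x = 0
  · simp [h]
  · have hn : (-x) ≠ 0 := neg_ne_zero.2 h
    rw [HahnSeries.leadingCoeff_of_ne h, HahnSeries.leadingCoeff_of_ne hn]
    have hmin : (-x).isWF_support.min (HahnSeries.support_nonempty_iff.2 hn)
        = x.isWF_support.min (HahnSeries.support_nonempty_iff.2 h) := by
      apply le_antisymm
      · exact Set.IsWF.min_le _ _ (by
          rw [HahnSeries.support_neg (x := x)]
          exact x.isWF_support.min_mem (HahnSeries.support_nonempty_iff.2 h))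
      · refine Set.IsWF.min_le _ _ ?_
        rw [← HahnSeries.support_neg (x := x)]
        exact (-x).isWF_support.min_mem (HahnSeries.support_nonempty_iff.2 hn)
    rw [hmin, HahnSeries.coeff_neg]

theorem hahn_leadingCoeff_add_pos {a b : HahnSeries Γ' k}
    (ha : 0 < a.leadingCoeff) (hb : 0 < b.leadingCoeff) : 0 < (a + b).leadingCoeff := by
  have key : ∀ x y : HahnSeries Γ' k, 0 < x.leadingCoeff → 0 < y.leadingCoeff →
      ∀ (hx0 : x ≠ 0) (hy0 : y ≠ 0),
      x.isWF_support.min (HahnSeries.support_nonempty_iff.2 hx0) ≤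
        y.isWF_support.min (HahnSeries.support_nonempty_iff.2 hy0) →
      0 < (x + y).leadingCoeff := by
    intro x y hx hy hx0 hy0 hle
    set mx := x.isWF_support.min (HahnSeries.support_nonempty_iff.2 hx0) with hmx
    set my := y.isWF_support.min (HahnSeries.support_nonempty_iff.2 hy0) with hmy
    have hcx : x.coeff mx = x.leadingCoeff := (HahnSeries.leadingCoeff_of_ne hx0).symm
    have hcoeff : 0 < (x + y).coeff mx := by
      rcases lt_or_eq_of_le hle with hlt | heq
      · have hny : y.coeff mx = 0 := by
          by_contra hc
          exact absurd (Set.IsWF.min_le _ _ (by rwa [HahnSeries.mem_support])) (not_le.2 hlt)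
        rw [HahnSeries.coeff_add, hny, add_zero, hcx]; exact hx
      · have hcy : y.coeff mx = y.leadingCoeff := by
          rw [heq]; exact (HahnSeries.leadingCoeff_of_ne hy0).symm
        rw [HahnSeries.coeff_add, hcx, hcy]; exact add_pos hx hy
    have hmem : mx ∈ (x + y).support := by
      rw [HahnSeries.mem_support]; exact ne_of_gt hcoeff
    have hxy0 : x + y ≠ 0 := HahnSeries.support_nonempty_iff.1 ⟨mx, hmem⟩
    have hminxy : (x + y).isWF_support.min (HahnSeries.support_nonempty_iff.2 hxy0) = mx := by
      apply le_antisymm (Set.IsWF.min_le _ _ hmem)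
      have hmm := (x + y).isWF_support.min_mem (HahnSeries.support_nonempty_iff.2 hxy0)
      rcases HahnSeries.support_add_subset _ _ hmm with hmem' | hmem'
      · exact Set.IsWF.min_le _ _ hmem'
      · exact le_trans hle (Set.IsWF.min_le _ _ hmem')
    rw [HahnSeries.leadingCoeff_of_ne hxy0, hminxy]
    exact hcoeff
  have ha0 : a ≠ 0 := by intro h; rw [h] at ha; simp at ha
  have hb0 : b ≠ 0 := by intro h; rw [h] at hb; simp at hb
  rcases le_total (a.isWF_support.min (HahnSeries.support_nonempty_iff.2 ha0))
      (b.isWF_support.min (HahnSeries.support_nonempty_iff.2 hb0)) with hle | hle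
  · exact key a b ha hb ha0 hb0 hle
  · rw [add_comm]; exact key b a hb ha hb0 ha0 hle

/-- The anti-lexicographic linear order on generalized power series:
`x` is positive iff its leading coefficient (the coefficient at the valuation `v x`,
i.e. at the largest element of the support) is positive. -/
instance instHahnLinearOrder : LinearOrder (HahnSeries Γ' k) where
  le x y := x = y ∨ 0 < (y - x).leadingCoeff
  lt x y := 0 < (y - x).leadingCoeff
  le_refl x := Or.inl rfl
  le_trans x y z hxy hyz := by
    rcases hxy with rfl | hxy
    · exact hyz
    rcases hyz with rfl | hyz
    · exact Or.inr hxy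
    · refine Or.inr ?_
      have := hahn_leadingCoeff_add_pos hyz hxy
      rwa [sub_add_sub_cancel] at this
  le_antisymm x y hxy hyx := by
    rcases hxy with rfl | hxy
    · rfl
    rcases hyx with rfl | hyx
    · rfl
    · exfalso
      have h1 : (x - y).leadingCoeff = -(y - x).leadingCoeff := by
        rw [← hahn_leadingCoeff_neg, neg_sub]
      rw [h1] at hyx
      exact absurd hxy (not_lt.2 (le_of_lt (neg_pos.1 hyx)))
  lt_iff_le_not_ge x y := by
    constructor
    · intro h
      refine ⟨Or.inr h, ?_⟩
      rintro (rfl | h')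
      · change 0 < (y - y).leadingCoeff at h
        rw [sub_self] at h
        simp at h
      · have h1 : (x - y).leadingCoeff = -(y - x).leadingCoeff := by
          rw [← hahn_leadingCoeff_neg, neg_sub]
        rw [h1] at h'
        exact absurd h (not_lt.2 (le_of_lt (neg_pos.1 h')))
    · rintro ⟨hle, hnot⟩
      rcases hle with rfl | h
      · exact absurd (Or.inl rfl) hnot
      · exact h
  le_total x y := by
    by_cases h : x = y
    · exact Or.inl (Or.inl h)
    · have h0 : y - x ≠ 0 := sub_ne_zero.2 (Ne.symm h)
      have hlc : (y - x).leadingCoeff ≠ 0 := HahnSeries.leadingCoeff_ne_zero.2 h0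
      rcases lt_or_gt_of_ne hlc with hneg | hpos
      · refine Or.inr (Or.inr ?_)
        rw [show x - y = -(y - x) from (neg_sub y x).symm, hahn_leadingCoeff_neg]
        exact neg_pos.2 hneg
      · exact Or.inl (Or.inr hpos)
  toDecidableLE := fun _ _ => Classical.dec _

/-- With the anti-lexicographic order, `k((G))` is a linearly ordered abelian group. -/
instance instHahnLOACG : IsOrderedAddMonoid (HahnSeries Γ' k) where
  add_le_add_left := by
    intro x y hxy c
    rcases hxy with rfl | h
    · exact le_refl _
    · exact Or.inr (by rwa [add_sub_add_right_eq_sub])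

theorem hahn_lt_iff (x y : HahnSeries Γ' k) : x < y ↔ 0 < (y - x).leadingCoeff := Iff.rfl

theorem hahn_single_pos (a : Γ') : (0 : HahnSeries Γ' k) < HahnSeries.single a 1 := by
  rw [hahn_lt_iff, sub_zero, HahnSeries.leadingCoeff_of_single]
  exact one_pos

theorem hahn_single_lt_single {a b : Γ'} (hab : b < a) :
    (HahnSeries.single a 1 : HahnSeries Γ' k) < HahnSeries.single b 1 := by
  rw [hahn_lt_iff]
  set δ : HahnSeries Γ' k := HahnSeries.single b 1 - HahnSeries.single a 1 with hδdef
  have hne : b ≠ a := ne_of_lt hab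
  have hb : δ.coeff b = 1 := by
    rw [hδdef, HahnSeries.coeff_sub, HahnSeries.coeff_single_same,
      HahnSeries.coeff_single_of_ne hne, sub_zero]
  have hbmem : b ∈ δ.support := by rw [HahnSeries.mem_support, hb]; exact one_ne_zero
  have hδ : δ ≠ 0 := HahnSeries.support_nonempty_iff.1 ⟨b, hbmem⟩
  have hsub : δ.support ⊆ {b, a} := by
    intro γ hγ
    rw [HahnSeries.mem_support] at hγ
    by_contra hγ'
    simp only [Set.mem_insert_iff, Set.mem_singleton_iff, not_or] at hγ'
    apply hγ
    rw [hδdef, HahnSeries.coeff_sub, HahnSeries.coeff_single_of_ne hγ'.1,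
      HahnSeries.coeff_single_of_ne hγ'.2, sub_zero]
  have hmin : δ.isWF_support.min (HahnSeries.support_nonempty_iff.2 hδ) = b := by
    have hmem := δ.isWF_support.min_mem (HahnSeries.support_nonempty_iff.2 hδ)
    have hle := δ.isWF_support.min_le (HahnSeries.support_nonempty_iff.2 hδ) hbmem
    rcases hsub hmem with h | h
    · exact h
    · exact absurd (h ▸ hle) (not_le.2 hab)
  rw [HahnSeries.leadingCoeff_of_ne hδ, hmin, hb]
  exact one_pos

end HahnOrder

section Series

variable {k : Type*} [Field k] [LinearOrder k] [IsStrictOrderedRing k] {G : Type*} [CommGroup G] [LinearOrder G] [IsOrderedMonoid G]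

/-- The summable family `n ↦ (-1)^n/(n+1) • ε^(n+1)` (`ε` of positive order). -/
def logFamily (ε : HahnSeries (gdual G) k) (hε : 0 < ε.orderTop) :
    HahnSeries.SummableFamily (gdual G) k ℕ where
  toFun n := ((-1 : k) ^ n / ((n : k) + 1)) • ε ^ (n + 1)
  isPWO_iUnion_support' := by
    refine ((HahnSeries.SummableFamily.powers ε).isPWO_iUnion_support).mono ?_
    intro γ hγ
    rw [Set.mem_iUnion] at hγ ⊢
    obtain ⟨n, hn⟩ := hγ
    refine ⟨n + 1, ?_⟩
    rw [HahnSeries.mem_support] at hn ⊢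
    rw [HahnSeries.SummableFamily.powers_of_orderTop_pos hε]
    intro h
    apply hn
    show (((-1 : k) ^ n / ((n : k) + 1)) • ε ^ (n + 1)).coeff γ = 0
    rw [HahnSeries.coeff_smul]
    show ((-1 : k) ^ n / ((n : k) + 1)) • (ε ^ (n + 1)).coeff γ = 0
    rw [show (ε ^ (n + 1)).coeff γ = 0 from h, smul_zero]
  finite_co_support' g := by
    have h := (HahnSeries.SummableFamily.powers ε).finite_co_support g
    refine Set.Finite.subset (h.preimage (Set.injOn_of_injective Nat.succ_injective)) ?_
    intro n hn
    simp only [Set.mem_preimage, Set.mem_setOf_eq] at hn ⊢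
    intro h0
    apply hn
    show (((-1 : k) ^ n / ((n : k) + 1)) • ε ^ (n + 1)).coeff g = 0
    rw [HahnSeries.coeff_smul]
    have : ((HahnSeries.SummableFamily.powers ε) (Nat.succ n)).coeff g = 0 := h0
    rw [HahnSeries.SummableFamily.powers_of_orderTop_pos hε] at this
    rw [show (ε ^ (n + 1)).coeff g = 0 from this, smul_zero]

/-- The logarithm on 1-units: `1 + ε ↦ Σ_{i ≥ 1} (-1)^(i-1) ε^i / i`
(for `ε` supported on `G^{<1}`; junk value `0` otherwise). -/
def logOneUnit (ε : HahnSeries (gdual G) k) : HahnSeries (gdual G) k :=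
  if hε : 0 < ε.orderTop then (logFamily ε hε).hsum else 0

/-- The canonical extension of an order-preserving embedding `ψ : G₁ → G₂` to the fields of
generalized power series, applying `ψ` to every monomial (junk value `0` if `ψ` is not
order-preserving). -/
def extMap {k : Type*} [Field k] [LinearOrder k] [IsStrictOrderedRing k] {G₁ G₂ : Type*} [CommGroup G₁] [LinearOrder G₁] [IsOrderedMonoid G₁]
    [CommGroup G₂] [LinearOrder G₂] [IsOrderedMonoid G₂] (ψ : G₁ → G₂) :
    HahnSeries (gdual G₁) k → HahnSeries (gdual G₂) k :=
  if h : StrictMono ψ then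
    HahnSeries.embDomain
      (OrderEmbedding.ofStrictMono (fun γ => toGd (ψ (toG γ)))
        (fun a b hab => show toGd (ψ (toG a)) < toGd (ψ (toG b)) from
          h (show toG b < toG a from hab)))
  else fun _ => 0

/-- The additive subgroup `k((G^{>1}))` of the series supported on `G^{>1}`. -/
def largeSeries (k : Type*) [Field k] [LinearOrder k] [IsStrictOrderedRing k] (G : Type*) [CommGroup G] [LinearOrder G] [IsOrderedMonoid G] :
    AddSubgroup (HahnSeries (gdual G) k) where
  carrier := {f | ∀ γ ∈ f.support, γ < (0 : gdual G)}
  zero_mem' := by intro γ hγ; rw [HahnSeries.support_zero] at hγ; exact absurd hγ (Set.notMem_empty γ)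
  add_mem' := by
    intro a b ha hb γ hγ
    rcases HahnSeries.support_add_subset _ _ hγ with h | h
    exacts [ha γ h, hb γ h]
  neg_mem' := by
    intro a ha γ hγ
    rw [HahnSeries.support_neg] at hγ
    exact ha γ hγ

theorem mem_largeSeries {f : HahnSeries (gdual G) k} :
    f ∈ largeSeries k G ↔ ∀ γ ∈ f.support, γ < (0 : gdual G) := Iff.rfl

/-- `log : (k^{>0}, ·) → (k, +)` is an order-preserving group embedding. -/
structure IsResidueLog (lg : k → k) : Prop where
  map_mul : ∀ a b : k, 0 < a → 0 < b → lg (a * b) = lg a + lg b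
  strictMonoOn : StrictMonoOn lg (Set.Ioi 0)

/-- A prelogarithmic section of `k((G))`: an order-preserving group embedding
`l : (G, ·) → (k((G^{>1})), +)`. -/
structure IsPrelogSection (l : G → HahnSeries (gdual G) k) : Prop where
  supp_large : ∀ g : G, l g ∈ largeSeries k G
  map_mul : ∀ g h : G, l (g * h) = l g + l h
  strictMono : StrictMono l

/-- The prelogarithm associated to a prelogarithmic section `l` and a logarithm `lg` on the
residue field: `L(g·a·(1+ε)) = l(g) + log(a) + Σ (-1)^(i-1) ε^i/i`. -/
def prelogL (lg : k → k) (l : G → HahnSeries (gdual G) k)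
    (α : HahnSeries (gdual G) k) : HahnSeries (gdual G) k :=
  l (toG α.order) + HahnSeries.C (lg α.leadingCoeff) +
    logOneUnit ((HahnSeries.single α.order α.leadingCoeff)⁻¹ * α - 1)

/-- The group of exponentials `G^# = e[k((G^{>1}))]`, a multiplicative copy of the ordered
additive group `k((G^{>1}))`. The element `e(α)` is `Multiplicative.ofAdd ⟨α, _⟩`. -/
abbrev Gsharp (k : Type*) [Field k] [LinearOrder k] [IsStrictOrderedRing k] (G : Type*) [CommGroup G] [LinearOrder G] [IsOrderedMonoid G] :
    Type _ := Multiplicative ↥(largeSeries k G)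

/-- The embedding `ι : G → G^#`, `ι(g) := e(l(g))`. -/
def iotaSharp (l : G → HahnSeries (gdual G) k) (hl : ∀ g, l g ∈ largeSeries k G) (g : G) :
    Gsharp k G :=
  Multiplicative.ofAdd (⟨l g, hl g⟩ : ↥(largeSeries k G))

/-- The prelogarithmic section `l^#` of `k((G^#))`: `l^#(e(α)) := ι(α)`, where
`ι : k((G)) → k((G^#))` is the canonical extension of `ι : G → G^#`. -/
def lsharpFun (l : G → HahnSeries (gdual G) k) (hl : ∀ g, l g ∈ largeSeries k G)
    (x : Gsharp k G) : HahnSeries (gdual (Gsharp k G)) k :=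
  extMap (iotaSharp l hl) ((Multiplicative.toAdd x : ↥(largeSeries k G)) : HahnSeries (gdual G) k)

/-- The induced map `ψ^# : G₁^# → G₂^#`, `ψ^#(e(α)) := e(ψ(α))` (junk value `1` if the
canonical extension of `ψ` does not map `k((G₁^{>1}))` into `k((G₂^{>1}))`). -/
def psiSharp {k : Type*} [Field k] [LinearOrder k] [IsStrictOrderedRing k] {G₁ G₂ : Type*} [CommGroup G₁] [LinearOrder G₁] [IsOrderedMonoid G₁]
    [CommGroup G₂] [LinearOrder G₂] [IsOrderedMonoid G₂] (ψ : G₁ → G₂) (x : Gsharp k G₁) : Gsharp k G₂ :=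
  if h : ∀ f ∈ largeSeries k G₁, extMap ψ f ∈ largeSeries k G₂ then
    Multiplicative.ofAdd
      (⟨extMap ψ ((Multiplicative.toAdd x : ↥(largeSeries k G₁)) : HahnSeries (gdual G₁) k),
        h _ (Multiplicative.toAdd x).2⟩ : ↥(largeSeries k G₂))
  else 1

/-- Condition (†) for subgroups `U ⊆ H` of `G`:
`l(H) < |f|` for every nonzero `f ∈ k((H^{>U}))`. -/
def CondDagger (l : G → HahnSeries (gdual G) k) (U H : Subgroup G) : Prop :=
  ∀ h ∈ H, ∀ f : HahnSeries (gdual G) k, f ≠ 0 →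
    (∀ γ ∈ f.support, toG γ ∈ H ∧ ∀ u ∈ U, u < toG γ) → l h < |f|

/-- The growth axiom for a subgroup `H` of `G`:
`l(H) < |f|` for every nonzero `f ∈ k((H^{>1}))`. -/
def GrowthAxiom (l : G → HahnSeries (gdual G) k) (H : Subgroup G) : Prop :=
  CondDagger l (⊥ : Subgroup G) H

theorem mem_large_of_gt {f : HahnSeries (gdual G) k} {U H : Subgroup G}
    (hf : ∀ γ ∈ f.support, toG γ ∈ H ∧ ∀ u ∈ U, u < toG γ) : f ∈ largeSeries k G :=
  fun γ hγ => show (1 : G) < toG γ from (hf γ hγ).2 1 U.one_mem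

/-- The set `H^{#,U} = ι(H)·e[k((H^{>U}))] ⊆ G^#`. -/
def sharpProdSet (l : G → HahnSeries (gdual G) k) (hl : ∀ g, l g ∈ largeSeries k G)
    (U H : Subgroup G) : Set (Gsharp k G) :=
  {x | ∃ h ∈ H, ∃ f : HahnSeries (gdual G) k,
    ∃ hf : ∀ γ ∈ f.support, toG γ ∈ H ∧ ∀ u ∈ U, u < toG γ,
    x = iotaSharp l hl h *
      Multiplicative.ofAdd (⟨f, mem_large_of_gt hf⟩ : ↥(largeSeries k G))}

end Series

section Hahn

variable (k : Type*) [Field k] [LinearOrder k] [IsStrictOrderedRing k] {Γ : Type*} [LinearOrder Γ]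

/-- The Hahn group `Γ^k` of formal products `∏_γ x_γ^(g γ)` with anti well-ordered support,
ordered anti-lexicographically, realized as the multiplicative copy of the additive group of
Hahn series over `Γᵒᵈ` with coefficients in `k`. -/
abbrev HahnGroup (Γ : Type*) [LinearOrder Γ] (k : Type*) [Field k] [LinearOrder k] [IsStrictOrderedRing k] : Type _ :=
  Multiplicative (HahnSeries Γᵒᵈ k)

/-- The monomial `x_γ` in the Hahn group `Γ^k`. -/
def xMon (γ : Γ) : HahnGroup Γ k :=
  Multiplicative.ofAdd (HahnSeries.single (OrderDual.toDual γ) (1 : k))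

/-- The prelogarithmic section `l_σ` on `k((Γ^k))` induced by `σ : Γ → Γ`:
`l_σ(∏_γ x_γ^(g γ)) := Σ_γ (g γ)·x_(σ γ)` (junk value `0` if `σ` is not strictly
order-preserving). -/
def sigmaSection (σ : Γ → Γ) :
    HahnGroup Γ k → HahnSeries (gdual (HahnGroup Γ k)) k :=
  if hσ : StrictMono σ then fun g =>
    HahnSeries.embDomain
      (OrderEmbedding.ofStrictMono
        (fun γ : Γᵒᵈ => toGd (xMon k (σ (OrderDual.ofDual γ))))
        (fun a b hab =>
          show toGd (xMon k (σ (OrderDual.ofDual a))) < toGd (xMon k (σ (OrderDual.ofDual b)))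
          from hahn_single_lt_single
            (show OrderDual.toDual (σ (OrderDual.ofDual a)) <
                OrderDual.toDual (σ (OrderDual.ofDual b)) from
              hσ (show OrderDual.ofDual b < OrderDual.ofDual a from hab))))
      (Multiplicative.toAdd g)
  else fun _ => 0

/-- The lift `ψ_σ : Γ^k → Γ^k` of `σ : Γ → Γ`, `ψ_σ(∏_γ x_γ^(g γ)) := ∏_γ x_(σ γ)^(g γ)`
(junk value `id` if `σ` is not strictly order-preserving). -/
def sigmaAuto (σ : Γ → Γ) : HahnGroup Γ k → HahnGroup Γ k :=
  if hσ : StrictMono σ then fun g =>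
    Multiplicative.ofAdd
      (HahnSeries.embDomain
        (OrderEmbedding.ofStrictMono
          (fun γ : Γᵒᵈ => OrderDual.toDual (σ (OrderDual.ofDual γ)))
          (fun a b hab =>
            show OrderDual.toDual (σ (OrderDual.ofDual a)) <
                OrderDual.toDual (σ (OrderDual.ofDual b)) from
              hσ (show OrderDual.ofDual b < OrderDual.ofDual a from hab)))
        (Multiplicative.toAdd g))
  else id

end Hahn

/-! Write `L x` and `E x` for the values at a series `x` of positive order of the power series
`log (1 + X)` and `exp X`. Evaluation commutes with substitution, so the formal identity
`exp (log (1 + X)) = 1 + X`, obtained by comparing derivatives, gives `E (L x) = 1 + x`, and the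
Cauchy product gives `E (x + y) = E x * E y`. Since `E x - 1` has the same leading term as `x`,
`E` is injective; hence `L` turns products of 1-units into sums and `L (E x - 1) = x`. Finally
`1 + y = (1 + x) * E (L y - L x)` shows that `L y - L x` and `y - x` have the same leading
coefficient, which is strict monotonicity. -/

namespace HahnSeries

variable {Γ R : Type*}

theorem orderTop_add_pos_of_pos [LinearOrder Γ] [Zero Γ] [AddMonoid R] {x y : R⟦Γ⟧}
    (hx : 0 < x.orderTop) (hy : 0 < y.orderTop) : 0 < (x + y).orderTop :=
  (lt_min hx hy).trans_le min_orderTop_le_orderTop_add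

theorem orderTop_sub_pos_of_pos [LinearOrder Γ] [Zero Γ] [AddGroup R] {x y : R⟦Γ⟧}
    (hx : 0 < x.orderTop) (hy : 0 < y.orderTop) : 0 < (x - y).orderTop :=
  (lt_min hx hy).trans_le min_orderTop_le_orderTop_sub

theorem orderTop_mul_pos_of_pos_of_nonneg [AddCommMonoid Γ] [LinearOrder Γ]
    [IsOrderedCancelAddMonoid Γ] [NonUnitalNonAssocSemiring R] {x y : R⟦Γ⟧}
    (hx : 0 < x.orderTop) (hy : 0 ≤ y.orderTop) : 0 < (x * y).orderTop :=
  hx.trans_le ((le_add_of_nonneg_right hy).trans orderTop_add_le_mul)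

theorem leadingCoeff_one_add [AddCommMonoid Γ] [LinearOrder Γ] [IsOrderedCancelAddMonoid Γ]
    [Semiring R] [Nontrivial R] {x : R⟦Γ⟧} (hx : 0 < x.orderTop) :
    (1 + x).leadingCoeff = 1 := by
  rw [leadingCoeff_add_eq_left (by rwa [orderTop_one]), leadingCoeff_one]

end HahnSeries

namespace HahnSeries.SummableFamily

variable {Γ R α β : Type*}

section PartialOrder

variable [PartialOrder Γ] [AddCommMonoid R]

theorem hsum_eq_hsum_of_coeff_eq_finsum {s : SummableFamily Γ R α} {t : SummableFamily Γ R β}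
    (c : α → β → Γ → R)
    (hc : ∀ g, (Function.support fun p : α × β => c p.1 p.2 g).Finite)
    (hs : ∀ a g, (s a).coeff g = ∑ᶠ b, c a b g)
    (ht : ∀ b g, (t b).coeff g = ∑ᶠ a, c a b g) :
    s.hsum = t.hsum := by
  ext g
  have hc' : (Function.support fun p : β × α => c p.2 p.1 g).Finite :=
    ((hc g).image Prod.swap).subset fun p hp => ⟨p.swap, hp, rfl⟩
  simp only [coeff_hsum, hs, ht]
  rw [← finsum_curry (fun p : α × β => c p.1 p.2 g) (hc g),
    ← finsum_curry (fun p : β × α => c p.2 p.1 g) hc',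
    ← finsum_comp_equiv (Equiv.prodComm β α)]
  rfl

theorem hsum_eq_hsum_of_eq_sum_fiber {s : SummableFamily Γ R α} {t : SummableFamily Γ R β}
    (π : α → β) (F : β → Finset α) (hF : ∀ a b, a ∈ F b ↔ π a = b)
    (ht : ∀ b, t b = ∑ a ∈ F b, s a) : t.hsum = s.hsum := by
  refine hsum_eq_hsum_of_coeff_eq_finsum (fun b a g => if π a = b then (s a).coeff g else 0)
    (fun g => ?_) (fun b g => ?_) (fun a g => ?_)
  · refine ((s.finite_co_support g).image fun a => (π a, a)).subset ?_
    rintro ⟨b, a⟩ hba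
    simp only [Function.mem_support, ne_eq, ite_eq_right_iff, Classical.not_imp] at hba
    exact ⟨a, hba.2, by simp [hba.1]⟩
  · rw [ht, coeff_sum, finsum_eq_sum_of_support_subset _ (s := F b) fun a ha => ?_]
    · exact Finset.sum_congr rfl fun a ha => (if_pos ((hF a b).1 ha)).symm
    · by_contra h
      exact ha (if_neg fun hab => h ((hF a b).2 hab))
  · rw [finsum_eq_single _ (π a) fun b hb => if_neg fun h => hb h.symm, if_pos rfl]

end PartialOrder

section LinearOrder

variable [LinearOrder Γ] [AddCommMonoid R]

theorem le_orderTop_hsum {s : SummableFamily Γ R α} {g : WithTop Γ}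
    (h : ∀ a, g ≤ (s a).orderTop) : g ≤ s.hsum.orderTop :=
  le_orderTop_iff_forall.2 fun γ hγ => by
    rw [coeff_hsum]
    exact finsum_eq_zero_of_forall_eq_zero fun a =>
      coeff_eq_zero_of_lt_orderTop (hγ.trans_le (h a))

end LinearOrder

end HahnSeries.SummableFamily

namespace PowerSeries

theorem coeff_pow_eq_zero_of_lt {R : Type*} [CommRing R] {g : R⟦X⟧} (hg : constantCoeff g = 0)
    {m n : ℕ} (hmn : m < n) : coeff m (g ^ n) = 0 :=
  X_pow_dvd_iff.1 (pow_dvd_pow_of_dvd (X_dvd_iff.2 hg) n) m hmn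

section Field

variable {K : Type*} [Field K] [CharZero K]

theorem derivative_log_mul_one_add_X : d⁄dX K (log K) * (1 + X) = 1 := by
  ext n
  rcases n with _ | m
  · simp [deriv_log]
  · simp [deriv_log, mul_add, coeff_succ_mul_X, pow_succ]

theorem exp_subst_log : (exp K).subst (log K) = 1 + X := by
  set u : K⟦X⟧ := (exp K).subst (log K)
  have hX : constantCoeff (1 + X : K⟦X⟧) ≠ 0 := by simp
  have hdlog : d⁄dX K (log K) = (1 + X)⁻¹ :=
    (eq_inv_iff_mul_eq_one hX).2 derivative_log_mul_one_add_X
  have hdu : d⁄dX K u = u * (1 + X)⁻¹ := by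
    rw [derivative_subst HasSubst.log, derivative_exp, hdlog]
  have hu₀ : constantCoeff u = 1 := by
    rw [← coeff_zero_eq_constantCoeff_apply, coeff_subst' HasSubst.log,
      finsum_eq_single _ 0 fun d hd => by
        rw [coeff_pow_eq_zero_of_lt constantCoeff_log (Nat.pos_of_ne_zero hd), smul_zero]]
    simp
  have key : u * (1 + X)⁻¹ = 1 := by
    refine derivative.ext ?_ (by simp [hu₀])
    rw [Derivation.leibniz, derivative_inv', hdu, Derivation.map_one_eq_zero]
    simp only [smul_eq_mul, map_add, derivative_X, derivative_one]
    ring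
  calc u = u * (1 + X)⁻¹ * (1 + X) := by
        rw [mul_assoc, PowerSeries.inv_mul_cancel _ hX, mul_one]
    _ = 1 + X := by rw [key, one_mul]

end Field

open HahnSeries HahnSeries.SummableFamily

variable {Γ R : Type*} [AddCommMonoid Γ] [LinearOrder Γ] [IsOrderedCancelAddMonoid Γ]
  [CommRing R] {x y : R⟦Γ⟧}

theorem coeff_heval_of_orderTop_pos (hx : 0 < x.orderTop) (f : R⟦X⟧) (γ : Γ) :
    (heval x f).coeff γ = ∑ᶠ n, coeff n f * (x ^ n).coeff γ := by
  simp [hx]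

theorem zero_le_orderTop_heval (hx : 0 < x.orderTop) (f : R⟦X⟧) :
    0 ≤ (heval x f).orderTop := by
  refine le_orderTop_hsum fun n => ?_
  rw [powerSeriesFamily_of_orderTop_pos hx]
  exact (nsmul_nonneg hx.le n).trans (orderTop_nsmul_le_orderTop_pow.trans
    (orderTop_le_orderTop_smul _ _))

theorem orderTop_heval_pos (hx : 0 < x.orderTop) {f : R⟦X⟧} (hf : constantCoeff f = 0) :
    0 < (heval x f).orderTop := by
  obtain ⟨g, rfl⟩ := X_dvd_iff.2 hf
  rw [map_mul, heval_X x hx]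
  exact orderTop_mul_pos_of_pos_of_nonneg hx (zero_le_orderTop_heval hx g)

theorem leadingCoeff_heval (hx : 0 < x.orderTop) {f : R⟦X⟧} (hf₀ : constantCoeff f = 0)
    (hf₁ : coeff 1 f = 1) : (heval x f).leadingCoeff = x.leadingCoeff := by
  obtain ⟨g, hg⟩ : X ^ 2 ∣ f - X := X_pow_dvd_iff.2 fun m hm => by
    interval_cases m <;> simp [hf₀, hf₁]
  rw [sub_eq_iff_eq_add'] at hg
  rw [hg, map_add, map_mul, map_pow, heval_X x hx]
  rcases eq_or_ne x 0 with rfl | hx₀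
  · simp
  obtain ⟨o, ho⟩ := WithTop.ne_top_iff_exists.1 (orderTop_ne_top.2 hx₀)
  have hlt : x.orderTop < 2 • x.orderTop := by
    rw [← ho] at hx ⊢
    rw [two_nsmul]
    exact_mod_cast lt_add_of_pos_right o (by exact_mod_cast hx)
  refine leadingCoeff_add_eq_left (hlt.trans_le ?_)
  exact orderTop_nsmul_le_orderTop_pow.trans ((le_add_of_nonneg_right
    (zero_le_orderTop_heval hx g)).trans orderTop_add_le_mul)

theorem heval_subst (hx : 0 < x.orderTop) {g : R⟦X⟧} (hg : constantCoeff g = 0) (f : R⟦X⟧) :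
    heval x (f.subst g) = heval (heval x g) f := by
  have hsub : HasSubst g := HasSubst.of_constantCoeff_zero' hg
  refine (hsum_eq_hsum_of_coeff_eq_finsum
    (fun n m γ => coeff n f * coeff m (g ^ n) * (x ^ m).coeff γ) (fun γ => ?_)
    (fun n γ => ?_) (fun m γ => ?_)).symm
  · refine ((pow_finite_co_support hx γ).biUnion fun m _ =>
      (Set.finite_Iic m).prod (Set.finite_singleton m)).subset ?_
    rintro ⟨n, m⟩ hnm
    refine Set.mem_biUnion (right_ne_zero_of_mul hnm) ⟨Set.mem_Iic.2 ?_, rfl⟩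
    by_contra hmn
    exact right_ne_zero_of_mul (left_ne_zero_of_mul hnm)
      (coeff_pow_eq_zero_of_lt hg (not_le.1 hmn))
  · rw [powerSeriesFamily_of_orderTop_pos (orderTop_heval_pos hx hg), HahnSeries.coeff_smul,
      ← map_pow, coeff_heval_of_orderTop_pos hx, smul_eq_mul, mul_finsum' _ _ ?_]
    · exact finsum_congr fun m => by ring
    · exact (pow_finite_co_support hx γ).subset fun m hm => right_ne_zero_of_mul hm
  · rw [powerSeriesFamily_of_orderTop_pos hx, HahnSeries.coeff_smul, coeff_subst' hsub,
      smul_eq_mul, finsum_mul' _ _ (coeff_subst_finite' hsub f m)]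
    exact finsum_congr fun n => by rw [smul_eq_mul]

theorem heval_add_exp [Algebra ℚ R] (hx : 0 < x.orderTop) (hy : 0 < y.orderTop) :
    heval (x + y) (exp R) = heval x (exp R) * heval y (exp R) := by
  have hxy : 0 < (x + y).orderTop := orderTop_add_pos_of_pos hx hy
  have hcoeff (n : ℕ) (z : R⟦Γ⟧) :
      coeff n (rescale z (exp R⟦Γ⟧)) = coeff n (exp R) • z ^ n := by
    rw [coeff_rescale, ← map_exp (HahnSeries.C : R →+* R⟦Γ⟧), coeff_map, mul_comm,
      C_mul_eq_smul]
  rw [heval_apply, heval_apply, heval_apply, ← hsum_mul]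
  refine hsum_eq_hsum_of_eq_sum_fiber (fun p : ℕ × ℕ => p.1 + p.2)
    Finset.HasAntidiagonal.antidiagonal (fun p n => Finset.HasAntidiagonal.mem_antidiagonal)
    fun n => ?_
  -- the `n`-th coefficient of `exp_mul_exp_eq_exp_add` over the ring `R⟦Γ⟧`
  rw [powerSeriesFamily_of_orderTop_pos hxy, ← hcoeff, ← exp_mul_exp_eq_exp_add, coeff_mul]
  refine Finset.sum_congr rfl fun p _ => ?_
  rw [mul_toFun, powerSeriesFamily_of_orderTop_pos hx, powerSeriesFamily_of_orderTop_pos hy,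
    hcoeff, hcoeff]

end PowerSeries

namespace HahnSeries

open PowerSeries

variable {Γ K : Type*} [AddCommMonoid Γ] [LinearOrder Γ] [IsOrderedCancelAddMonoid Γ] [Field K]
  [CharZero K] {x y : K⟦Γ⟧}

theorem orderTop_heval_log_pos (hx : 0 < x.orderTop) : 0 < (heval x (log K)).orderTop :=
  orderTop_heval_pos hx constantCoeff_log

theorem orderTop_heval_exp_sub_one_pos (hx : 0 < x.orderTop) :
    0 < (heval x (exp K - 1)).orderTop :=
  orderTop_heval_pos hx (by simp [constantCoeff_exp])

theorem heval_exp_heval_log (hx : 0 < x.orderTop) :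
    heval (heval x (log K)) (exp K) = 1 + x := by
  rw [← heval_subst hx constantCoeff_log, exp_subst_log, map_add, map_one, heval_X x hx]

theorem eq_of_heval_exp_eq (hx : 0 < x.orderTop) (hy : 0 < y.orderTop)
    (h : heval x (exp K) = heval y (exp K)) : x = y := by
  have hd := orderTop_sub_pos_of_pos hx hy
  have hy₀ : heval y (exp K) ≠ 0 := fun h₀ => by
    simpa [h₀, constantCoeff_exp] using coeff_heval_zero y (exp K)
  have h₁ : heval (x - y) (exp K) = 1 := mul_left_cancel₀ hy₀ <| by
    rw [← heval_add_exp hy hd, add_sub_cancel, h, mul_one]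
  have h₂ : (x - y).leadingCoeff = 0 := by
    rw [← leadingCoeff_heval hd (f := exp K - 1) (by simp [constantCoeff_exp])
      (by simp [coeff_exp]), map_sub, h₁, map_one, sub_self, leadingCoeff_zero]
  exact sub_eq_zero.1 (leadingCoeff_eq_zero.1 h₂)

theorem heval_log_add_add_mul (hx : 0 < x.orderTop) (hy : 0 < y.orderTop) :
    heval (x + y + x * y) (log K) = heval x (log K) + heval y (log K) := by
  have hxy := orderTop_add_pos_of_pos (orderTop_add_pos_of_pos hx hy)
    (orderTop_mul_pos_of_pos_of_nonneg hx hy.le)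
  refine eq_of_heval_exp_eq (orderTop_heval_log_pos hxy)
    (orderTop_add_pos_of_pos (orderTop_heval_log_pos hx) (orderTop_heval_log_pos hy)) ?_
  rw [heval_exp_heval_log hxy, heval_add_exp (orderTop_heval_log_pos hx)
    (orderTop_heval_log_pos hy), heval_exp_heval_log hx, heval_exp_heval_log hy]
  ring

theorem heval_log_heval_exp_sub_one (hx : 0 < x.orderTop) :
    heval (heval x (exp K - 1)) (log K) = x := by
  refine eq_of_heval_exp_eq (orderTop_heval_log_pos (orderTop_heval_exp_sub_one_pos hx)) hx ?_
  rw [heval_exp_heval_log (orderTop_heval_exp_sub_one_pos hx), map_sub, map_one, add_sub_cancel]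

theorem leadingCoeff_heval_log_sub (hx : 0 < x.orderTop) (hy : 0 < y.orderTop) :
    (heval y (log K) - heval x (log K)).leadingCoeff = (y - x).leadingCoeff := by
  set d := heval y (log K) - heval x (log K)
  have hd : 0 < d.orderTop :=
    orderTop_sub_pos_of_pos (orderTop_heval_log_pos hy) (orderTop_heval_log_pos hx)
  have h : 1 + y = (1 + x) * heval d (exp K) := by
    rw [← heval_exp_heval_log hy, ← heval_exp_heval_log hx,
      ← heval_add_exp (orderTop_heval_log_pos hx) hd, add_sub_cancel]
  have h' : y - x = (1 + x) * heval d (exp K - 1) := by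
    rw [map_sub, map_one, mul_sub, ← h]
    ring
  rw [h', leadingCoeff_mul, leadingCoeff_one_add hx, one_mul,
    leadingCoeff_heval hd (by simp [constantCoeff_exp]) (by simp [coeff_exp])]

end HahnSeries

open PowerSeries HahnSeries.SummableFamily in
theorem logOneUnit_eq_heval {k : Type*} [Field k] [LinearOrder k] [IsStrictOrderedRing k]
    {G : Type*} [CommGroup G] [LinearOrder G] [IsOrderedMonoid G] {ε : HahnSeries (gdual G) k}
    (hε : 0 < ε.orderTop) : logOneUnit ε = heval ε (log k) := by
  rw [logOneUnit, dif_pos hε, heval_apply,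
    ← hsum_embDomain (logFamily ε hε) ⟨_, Nat.succ_injective⟩]
  congr 1
  ext1 n
  rw [powerSeriesFamily_of_orderTop_pos hε]
  rcases n with _ | m
  · rw [embDomain_of_notMem_range _ _ fun h => Nat.succ_ne_zero _ h.choose_spec]
    simp
  · refine (embDomain_image (logFamily ε hε) ⟨_, Nat.succ_injective⟩ (a := m)).trans ?_
    show ((-1 : k) ^ m / ((m : k) + 1)) • ε ^ (m + 1) = _
    simp [pow_succ]

-- `ε ∈ k((G^{<1}))` is encoded as `0 < ε.orderTop`; `(1 + ε)(1 + δ) = 1 + (ε + δ + εδ)`.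
/-- The logarithm on 1-units is a well-defined order-preserving group
isomorphism from the multiplicative group `1 + k((G^{<1}))` onto the additive group
`(k((G^{<1})), +)`.  Here `ε ∈ k((G^{<1}))` is expressed as `0 < ε.orderTop` (the support of
`ε` is contained in `G^{<1}`).  The four conjuncts state: the series
`Σ_{i≥1} (-1)^(i-1) ε^i/i` has (anti well-ordered) support contained in `G^{<1}`; the map
`1+ε ↦ Σ_{i≥1} (-1)^(i-1) ε^i/i` sends products to sums (note
`(1+ε)(1+δ) = 1 + (ε+δ+εδ)`); it is strictly order-preserving (note `1+ε < 1+δ ↔ ε < δ`);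
and it is bijective onto `k((G^{<1}))`. -/
theorem logOneUnit_orderIso {k : Type*} [Field k] [LinearOrder k] [IsStrictOrderedRing k]
    {G : Type*} [CommGroup G] [LinearOrder G] [IsOrderedMonoid G] :
    (∀ ε : HahnSeries (gdual G) k, 0 < ε.orderTop →
      ∀ γ ∈ (logOneUnit ε).support, (0 : gdual G) < γ) ∧
    (∀ ε δ : HahnSeries (gdual G) k, 0 < ε.orderTop → 0 < δ.orderTop →
      logOneUnit (ε + δ + ε * δ) = logOneUnit ε + logOneUnit δ) ∧
    (∀ ε δ : HahnSeries (gdual G) k, 0 < ε.orderTop → 0 < δ.orderTop →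
      ε < δ → logOneUnit ε < logOneUnit δ) ∧
    (∀ β : HahnSeries (gdual G) k, 0 < β.orderTop →
      ∃! ε : HahnSeries (gdual G) k, 0 < ε.orderTop ∧ logOneUnit ε = β) := by
  have hmono : StrictMonoOn (logOneUnit (k := k) (G := G)) {ε | 0 < ε.orderTop} :=
    fun ε hε δ hδ h => by
      rw [hahn_lt_iff] at h ⊢
      rwa [logOneUnit_eq_heval hε, logOneUnit_eq_heval hδ, leadingCoeff_heval_log_sub hε hδ]
  refine ⟨fun ε hε γ hγ => ?_, fun ε δ hε hδ => ?_, fun ε δ hε hδ => hmono hε hδ,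
    fun β hβ => ?_⟩
  · rw [logOneUnit_eq_heval hε] at hγ
    exact WithTop.coe_lt_coe.1
      ((orderTop_heval_log_pos hε).trans_le (orderTop_le_of_coeff_ne_zero hγ))
  · rw [logOneUnit_eq_heval (orderTop_add_pos_of_pos (orderTop_add_pos_of_pos hε hδ)
      (orderTop_mul_pos_of_pos_of_nonneg hε hδ.le)), logOneUnit_eq_heval hε,
      logOneUnit_eq_heval hδ, heval_log_add_add_mul hε hδ]
  · have hε := orderTop_heval_exp_sub_one_pos (K := k) hβ
    refine ⟨_, ⟨hε, by rw [logOneUnit_eq_heval hε, heval_log_heval_exp_sub_one hβ]⟩, ?_⟩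
    rintro ε ⟨hε', h⟩
    refine hmono.injOn hε' hε ?_
    rw [h, logOneUnit_eq_heval hε, heval_log_heval_exp_sub_one hβ]

end
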